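/- Let G be a context-free grammar in Chomsky normal form with nonterminals X₁,…,Xₙ over terminal alphabet Σ, and for each nonterminal X_i define recursively φ_i =μ ⋁_{X_i→a} ⟨a⟩_x (x∼y) ∨ ⋁_{X_i→X_jX_k} {z←x}⟨-⟩_z*( ({y←z}φ_j) ∧ ({x←z}φ_k) ), where x∼y is the Lμω formula characterizing bisimilarity of v(x) and v(y), and ⟨-⟩_z*φ := μZ. φ ∨ ⋁_{a∈Σ}⟨a⟩_z Z. Then for every word w∈Σ*, letting L_w be the linear LTS of w and v a valuation with v(x) the initial and v(y) the final state of L_w: L_w, v ⊨ φ_i if and only if w is derivable in G starting from the nonterminal X_i. -/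

import Mathlib

/-- A labeled transition system over edge labels `Λ` and atomic propositions `P`. -/
structure LTS (Λ P : Type) where
  S : Type
  s0 : S
  Tr : S → Λ → S → Prop
  rho : S → Set P

/-- Formulas of the higher-dimensional modal μ-calculus Lμω. -/
inductive Formula (Λ P V V2 : Type) : Type
  | prop : P → V → Formula Λ P V V2
  | svar : V2 → Formula Λ P V V2
  | neg : Formula Λ P V V2 → Formula Λ P V V2
  | and : Formula Λ P V V2 → Formula Λ P V V2 → Formula Λ P V V2
  | dia : Λ → V → Formula Λ P V V2 → Formula Λ P V V2
  | mu : V2 → Formula Λ P V V2 → Formula Λ P V V2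
  | repl : (V → V) → Formula Λ P V V2 → Formula Λ P V V2

variable {Λ P V V2 : Type}

/-- Semantics of Lμω : a set of first-order valuations. -/
def sem [DecidableEq V] [DecidableEq V2] (L : LTS Λ P) :
    Formula Λ P V V2 → (V2 → Set (V → L.S)) → Set (V → L.S)
  | .prop p x, _ => {v | p ∈ L.rho (v x)}
  | .svar X, 𝒱 => 𝒱 X
  | .neg φ, 𝒱 => (sem L φ 𝒱)ᶜ
  | .and φ ψ, 𝒱 => sem L φ 𝒱 ∩ sem L ψ 𝒱
  | .dia a x φ, 𝒱 => {v | ∃ s, L.Tr (v x) a s ∧ Function.update v x s ∈ sem L φ 𝒱}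
  | .mu X φ, 𝒱 => ⋂₀ {Q | sem L φ (Function.update 𝒱 X Q) ⊆ Q}
  | .repl κ φ, 𝒱 => {v | (fun z => v (κ z)) ∈ sem L φ 𝒱}

/-- Derived operator: disjunction. -/
def Formula.or (φ ψ : Formula Λ P V V2) : Formula Λ P V V2 := .neg (.and (.neg φ) (.neg ψ))

/-- Derived operator: box modality. -/
def Formula.box (a : Λ) (x : V) (φ : Formula Λ P V V2) : Formula Λ P V V2 :=
  .neg (.dia a x (.neg φ))

/-- Replace every occurrence of the second-order variable `X` by `¬X`. -/
def Formula.substNeg [DecidableEq V2] (X : V2) : Formula Λ P V V2 → Formula Λ P V V2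
  | .prop p x => .prop p x
  | .svar Y => if Y = X then .neg (.svar Y) else .svar Y
  | .neg φ => .neg (φ.substNeg X)
  | .and φ ψ => .and (φ.substNeg X) (ψ.substNeg X)
  | .dia a x φ => .dia a x (φ.substNeg X)
  | .mu Y φ => .mu Y (φ.substNeg X)
  | .repl κ φ => .repl κ (φ.substNeg X)

/-- Derived operator: greatest fixed point, `νX.φ := ¬μX.¬φ[X:=¬X]`. -/
def Formula.nu [DecidableEq V2] (X : V2) (φ : Formula Λ P V V2) : Formula Λ P V V2 :=
  .neg (.mu X (.neg (φ.substNeg X)))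

/-- Falsity, definable as `μX.X`. -/
def Formula.bot (X : V2) : Formula Λ P V V2 := .mu X (.svar X)

/-- Truth. -/
def Formula.top (X : V2) : Formula Λ P V V2 := .neg (.bot X)

/-- Finite conjunction (`X` is a dummy second-order variable for the empty case). -/
def bigAnd (X : V2) (l : List (Formula Λ P V V2)) : Formula Λ P V V2 := l.foldr .and (.top X)

/-- Finite disjunction. -/
def bigOr (X : V2) (l : List (Formula Λ P V V2)) : Formula Λ P V V2 := l.foldr .or (.bot X)

/-- Derived operator: implication. -/
def Formula.imp (φ ψ : Formula Λ P V V2) : Formula Λ P V V2 := .neg (.and φ (.neg ψ))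

/-- Derived operator: bi-implication. -/
def Formula.iff (φ ψ : Formula Λ P V V2) : Formula Λ P V V2 := .and (φ.imp ψ) (ψ.imp φ)

/-- A context-free grammar in Chomsky normal form over nonterminals `NT` and terminal
alphabet `Alph`: rules are of the forms `X → a` and `X → Y Z`. -/
structure CNFGrammar (NT Alph : Type) where
  R1 : Finset (NT × Alph)
  R2 : Finset (NT × NT × NT)

/-- The usual derivation relation of a CNF grammar: `Derives G X w` iff `X ⇒* w`. -/
inductive Derives {NT Alph : Type} (G : CNFGrammar NT Alph) : NT → List Alph → Prop
  | leaf {X : NT} {a : Alph} : (X, a) ∈ G.R1 → Derives G X [a]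
  | node {X Y Z : NT} {u v : List Alph} : (X, Y, Z) ∈ G.R2 →
      Derives G Y u → Derives G Z v → Derives G X (u ++ v)

/-- The linear LTS of a finite word `w`: states are the positions `0, …, |w|`,
with an `a`-transition from `i-1` to `i` when the `i`-th letter of `w` is `a`,
and empty proposition labeling. -/
def linLTS {Alph : Type} (w : List Alph) : LTS Alph Empty where
  S := Fin (w.length + 1)
  s0 := ⟨0, Nat.succ_pos _⟩
  Tr := fun i a j =>
    ∃ h : (i : ℕ) < w.length, w.get ⟨i, h⟩ = a ∧ (j : ℕ) = (i : ℕ) + 1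
  rho := fun _ => ∅

/-- First-order variables: `x = 0`, `y = 1`, `z = 2`.  Second-order variables:
`Sum.inl i` is the variable of the nonterminal `i`, `Sum.inr` are auxiliary. -/
abbrev PVar2 (NT : Type) := NT ⊕ ℕ

/-- The formula `x ∼ y` characterizing bisimilarity (the conjunction over the empty set
of atomic propositions is `⊤`). -/
noncomputable def bisimF (NT : Type) [DecidableEq NT] (Alph : Type) [Fintype Alph] :
    Formula Alph Empty (Fin 3) (PVar2 NT) :=
  Formula.nu (.inr 0) (.and (bigAnd (.inr 2) [])
    (.and
      (bigAnd (.inr 2) ((Finset.univ : Finset Alph).toList.map fun a =>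
        Formula.box a 0 (.dia a 1 (.svar (.inr 0)))))
      (.repl (fun v => if v = 0 then 1 else if v = 1 then 0 else v) (.svar (.inr 0)))))

/-- `⟨-⟩_z^* φ := μZ. φ ∨ ⋁_{a∈Σ} ⟨a⟩_z Z`. -/
noncomputable def diaStarZ {NT Alph : Type} [Fintype Alph]
    (φ : Formula Alph Empty (Fin 3) (PVar2 NT)) : Formula Alph Empty (Fin 3) (PVar2 NT) :=
  .mu (.inr 1) (.or φ (bigOr (.inr 2) ((Finset.univ : Finset Alph).toList.map fun a =>
    .dia a 2 (.svar (.inr 1)))))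

/-- The right-hand side of the recursive definition
`φ_i =μ ⋁_{X_i→a} ⟨a⟩_x (x∼y) ∨
       ⋁_{X_i→X_jX_k} {z←x}⟨-⟩_z^*( ({y←z}φ_j) ∧ ({x←z}φ_k) )`. -/
noncomputable def cfgBody {NT Alph : Type} [DecidableEq NT] [DecidableEq Alph]
    [Fintype Alph] (G : CNFGrammar NT Alph) (i : NT) :
    Formula Alph Empty (Fin 3) (PVar2 NT) :=
  .or
    (bigOr (.inr 2) (((G.R1.filter (fun r => r.1 = i)).toList).map fun r =>
      .dia r.2 0 (bisimF NT Alph)))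
    (bigOr (.inr 2) (((G.R2.filter (fun r => r.1 = i)).toList).map fun r =>
      .repl (fun v => if v = 2 then 0 else v)
        (diaStarZ (.and
          (.repl (fun v => if v = 1 then 2 else v) (.svar (.inl r.2.1)))
          (.repl (fun v => if v = 0 then 2 else v) (.svar (.inl r.2.2)))))))

/-- One step of the simultaneous fixpoint system: evaluate each body, reading the
second-order variable of each nonterminal from the assignment `σ`. -/
noncomputable def cfgStep {NT Alph : Type} [DecidableEq NT] [DecidableEq Alph]
    [Fintype Alph] (G : CNFGrammar NT Alph) (L : LTS Alph Empty)
    (σ : NT → Set (Fin 3 → L.S)) (i : NT) : Set (Fin 3 → L.S) :=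
  sem L (cfgBody G i) (fun X => match X with | .inl j => σ j | .inr _ => ∅)

/-- The simultaneous least fixed point of the system: pointwise intersection of all
prefixed points. -/
noncomputable def cfgLfp {NT Alph : Type} [DecidableEq NT] [DecidableEq Alph]
    [Fintype Alph] (G : CNFGrammar NT Alph) (L : LTS Alph Empty) (i : NT) :
    Set (Fin 3 → L.S) :=
  ⋂₀ {Q | ∃ σ, (∀ j, cfgStep G L σ j ⊆ σ j) ∧ Q = σ i}

/-!
On the linear LTS of `w` two states are bisimilar only if they are equal, since a later state
reaches the end of the word first; so `x ∼ y` says `x = y`, and `⟨-⟩_z^*` ranges over the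
positions from `z` on. The body of `φ_i` therefore holds of `(x, y)` iff `(x, y)` spans a letter
`a` with `X_i → a`, or some position `s` splits `[x, y]` into segments satisfying `φ_j` and `φ_k`
for a rule `X_i → X_j X_k`. Thus "the segment of `w` from `x` to `y` is derivable from `X_i`" is
a prefixed point of the system, and by induction on derivations it lies below every prefixed
point: it is the least fixed point.
-/

open Function Relation

section Semantics
variable {Λ P V V2 : Type} [DecidableEq V] [DecidableEq V2] {L : LTS Λ P}

lemma sem_or (φ ψ : Formula Λ P V V2) (𝒱 : V2 → Set (V → L.S)) :
    sem L (φ.or ψ) 𝒱 = sem L φ 𝒱 ∪ sem L ψ 𝒱 := by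
  simp [Formula.or, sem, Set.compl_inter]

lemma sem_bot (X : V2) (𝒱 : V2 → Set (V → L.S)) :
    sem L (Formula.bot X : Formula Λ P V V2) 𝒱 = ∅ :=
  Set.eq_empty_of_subset_empty (Set.sInter_subset_of_mem (by simp [sem]))

lemma sem_top (X : V2) (𝒱 : V2 → Set (V → L.S)) :
    sem L (Formula.top X : Formula Λ P V V2) 𝒱 = Set.univ := by
  simp [Formula.top, sem, sem_bot]

lemma mem_sem_bigOr {X : V2} {l : List (Formula Λ P V V2)} {𝒱 : V2 → Set (V → L.S)}
    {v : V → L.S} : v ∈ sem L (bigOr X l) 𝒱 ↔ ∃ φ ∈ l, v ∈ sem L φ 𝒱 := by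
  induction l with
  | nil => simp [bigOr, sem_bot]
  | cons φ l ih => simp_all [bigOr, sem_or]

lemma mem_sem_bigAnd {X : V2} {l : List (Formula Λ P V V2)} {𝒱 : V2 → Set (V → L.S)}
    {v : V → L.S} : v ∈ sem L (bigAnd X l) 𝒱 ↔ ∀ φ ∈ l, v ∈ sem L φ 𝒱 := by
  induction l with
  | nil => simp [bigAnd, sem_top]
  | cons φ l ih => simp_all [bigAnd, sem]

lemma mem_sem_box {a : Λ} {x : V} {φ : Formula Λ P V V2} {𝒱 : V2 → Set (V → L.S)}
    {v : V → L.S} :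
    v ∈ sem L (Formula.box a x φ) 𝒱 ↔ ∀ s, L.Tr (v x) a s → update v x s ∈ sem L φ 𝒱 := by
  simp [Formula.box, sem]

lemma mem_sem_mu {X : V2} {φ : Formula Λ P V V2} {𝒱 : V2 → Set (V → L.S)} {v : V → L.S} :
    v ∈ sem L (Formula.mu X φ) 𝒱 ↔ ∀ Q, sem L φ (update 𝒱 X Q) ⊆ Q → v ∈ Q := by
  simp [sem]

end Semantics

section GreatestFixpoint
variable {Λ P V V2 : Type}

/-- `substNeg` ignores binders, so it is only meaningful when `X` is not rebound by a `μ`. -/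
def Formula.NeverBinds (X : V2) : Formula Λ P V V2 → Prop
  | .prop _ _ | .svar _ => True
  | .neg φ | .dia _ _ φ | .repl _ φ => φ.NeverBinds X
  | .and φ ψ => φ.NeverBinds X ∧ ψ.NeverBinds X
  | .mu Y φ => Y ≠ X ∧ φ.NeverBinds X

lemma neverBinds_bigAnd {X Y : V2} (hYX : Y ≠ X) {l : List (Formula Λ P V V2)}
    (hl : ∀ φ ∈ l, φ.NeverBinds X) : (bigAnd Y l).NeverBinds X := by
  induction l with
  | nil => exact ⟨hYX, trivial⟩
  | cons φ l ih => exact ⟨hl φ (by simp), ih fun ψ hψ => hl ψ (by simp [hψ])⟩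

variable [DecidableEq V] [DecidableEq V2] {L : LTS Λ P}

lemma sem_substNeg {X : V2} {φ : Formula Λ P V V2} (hφ : φ.NeverBinds X)
    (𝒱 : V2 → Set (V → L.S)) :
    sem L (φ.substNeg X) 𝒱 = sem L φ (update 𝒱 X (𝒱 X)ᶜ) := by
  induction φ generalizing 𝒱 with
  | prop p x => rfl
  | svar Y => by_cases hY : Y = X <;> simp [Formula.substNeg, hY, sem]
  | neg φ ih => simp only [Formula.substNeg, sem, ih hφ]
  | and φ ψ ih₁ ih₂ => simp only [Formula.substNeg, sem, ih₁ hφ.1, ih₂ hφ.2]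
  | dia a x φ ih => simp only [Formula.substNeg, sem, ih hφ]
  | repl κ φ ih => simp only [Formula.substNeg, sem, ih hφ]
  | mu Y φ ih =>
    obtain ⟨hYX, hφ⟩ := hφ
    simp only [Formula.substNeg, sem, ih hφ, update_of_ne (Ne.symm hYX),
      update_comm (Ne.symm hYX)]

lemma sem_nu {X : V2} {φ : Formula Λ P V V2} (hφ : φ.NeverBinds X) (𝒱 : V2 → Set (V → L.S)) :
    sem L (Formula.nu X φ) 𝒱 = ⋃₀ {Q | Q ⊆ sem L φ (update 𝒱 X Q)} := by
  have hdual : ∀ Q, (sem L (φ.substNeg X) (update 𝒱 X Q))ᶜ ⊆ Q ↔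
      Qᶜ ⊆ sem L φ (update 𝒱 X Qᶜ) := by
    intro Q
    rw [sem_substNeg hφ, update_idem, update_self, Set.compl_subset_comm]
  ext v
  simp only [Formula.nu, sem, Set.mem_compl_iff, Set.mem_sInter, Set.mem_sUnion,
    Set.mem_ofPred_eq, hdual, not_forall, exists_prop]
  constructor
  · rintro ⟨Q, hQ, hvQ⟩
    exact ⟨Qᶜ, hQ, hvQ⟩
  · rintro ⟨R, hR, hvR⟩
    exact ⟨Rᶜ, by rwa [compl_compl], by simpa⟩

end GreatestFixpoint

namespace LTS
variable {Λ P : Type} (L : LTS Λ P)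

def Reachable : L.S → L.S → Prop := ReflTransGen fun p q => ∃ a, L.Tr p a q

def IsBisimulation (R : L.S → L.S → Prop) : Prop :=
  ∀ p q, R p q → R q p ∧ L.rho p = L.rho q ∧ ∀ a p', L.Tr p a p' → ∃ q', L.Tr q a q' ∧ R p' q'

def Bisimilar (p q : L.S) : Prop := ∃ R, L.IsBisimulation R ∧ R p q

lemma bisimilar_refl (p : L.S) : L.Bisimilar p p :=
  ⟨Eq, by rintro p q rfl; exact ⟨rfl, rfl, fun a p' h => ⟨p', h, rfl⟩⟩, rfl⟩

end LTS

noncomputable def bisimBody (NT Alph : Type) [Fintype Alph] :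
    Formula Alph Empty (Fin 3) (PVar2 NT) :=
  .and (bigAnd (.inr 2) [])
    (.and
      (bigAnd (.inr 2) ((Finset.univ : Finset Alph).toList.map fun a =>
        Formula.box a 0 (.dia a 1 (.svar (.inr 0)))))
      (.repl (fun v => if v = 0 then 1 else if v = 1 then 0 else v) (.svar (.inr 0))))

section CFGFormulas
variable {NT Alph : Type} [Fintype Alph]

lemma neverBinds_bisimBody : (bisimBody NT Alph).NeverBinds (.inr 0) :=
  ⟨neverBinds_bigAnd (by simp) (by simp),
    neverBinds_bigAnd (by simp) (by simp [Formula.box, Formula.NeverBinds]), trivial⟩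

variable [DecidableEq NT] {L : LTS Alph Empty}

lemma mem_sem_diaStarZ {φ : Formula Alph Empty (Fin 3) (PVar2 NT)}
    {𝒱 : PVar2 NT → Set (Fin 3 → L.S)} (hφ : ∀ Q, sem L φ (update 𝒱 (.inr 1) Q) = sem L φ 𝒱)
    {v : Fin 3 → L.S} :
    v ∈ sem L (diaStarZ φ) 𝒱 ↔ ∃ s, L.Reachable (v 2) s ∧ update v 2 s ∈ sem L φ 𝒱 := by
  have hbody : ∀ Q u, u ∈ sem L (.or φ (bigOr (.inr 2) ((Finset.univ : Finset Alph).toList.map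
      fun a => .dia a 2 (.svar (.inr 1))))) (update 𝒱 (.inr 1) Q) ↔
      u ∈ sem L φ 𝒱 ∨ ∃ a t, L.Tr (u 2) a t ∧ update u 2 t ∈ Q := by
    intro Q u
    rw [sem_or, Set.mem_union, hφ, mem_sem_bigOr]
    simp [sem]
  rw [diaStarZ, mem_sem_mu]
  constructor
  · intro hv
    refine hv {u | ∃ s, L.Reachable (u 2) s ∧ update u 2 s ∈ sem L φ 𝒱} fun u hu => ?_
    rcases (hbody _ u).1 hu with hu | ⟨a, t, htr, s, hts, hs⟩
    · exact ⟨u 2, .refl, by rwa [update_eq_self]⟩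
    · rw [update_self] at hts
      rw [update_idem] at hs
      exact ⟨s, .head ⟨a, htr⟩ hts, hs⟩
  · rintro ⟨s, hreach, hs⟩ Q hQ
    suffices ∀ p, L.Reachable p s → ∀ u, u 2 = p → update u 2 s ∈ sem L φ 𝒱 → u ∈ Q from
      this _ hreach v rfl hs
    intro p hp
    induction hp using ReflTransGen.head_induction_on with
    | refl =>
      rintro u rfl hu
      rw [update_eq_self] at hu
      exact hQ ((hbody Q u).2 (.inl hu))
    | head hstep _ ih =>
      obtain ⟨a, htr⟩ := hstep
      rintro u rfl hu
      exact hQ ((hbody Q u).2 (.inr ⟨a, _, htr, ih _ (update_self ..) (by rwa [update_idem])⟩))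

lemma mem_sem_bisimBody {𝒱 : PVar2 NT → Set (Fin 3 → L.S)} {Q : Set (Fin 3 → L.S)}
    {u : Fin 3 → L.S} :
    u ∈ sem L (bisimBody NT Alph) (update 𝒱 (.inr 0) Q) ↔
      (∀ a s, L.Tr (u 0) a s → ∃ t, L.Tr (u 1) a t ∧ update (update u 0 s) 1 t ∈ Q) ∧
        ![u 1, u 0, u 2] ∈ Q := by
  have hswap : (fun z : Fin 3 => u (if z = 0 then 1 else if z = 1 then 0 else z)) =
      ![u 1, u 0, u 2] := by
    funext z; fin_cases z <;> rfl
  simp [bisimBody, sem, mem_sem_bigAnd, mem_sem_box, hswap]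

lemma mem_sem_bisimF {𝒱 : PVar2 NT → Set (Fin 3 → L.S)} {v : Fin 3 → L.S} :
    v ∈ sem L (bisimF NT Alph) 𝒱 ↔ L.Bisimilar (v 0) (v 1) := by
  rw [show bisimF NT Alph = .nu (.inr 0) (bisimBody NT Alph) from rfl, sem_nu neverBinds_bisimBody,
    Set.mem_sUnion]
  constructor
  · rintro ⟨Q, hQ, hvQ⟩
    refine ⟨fun p q => ∃ u ∈ Q, u 0 = p ∧ u 1 = q, ?_, v, hvQ, rfl, rfl⟩
    rintro _ _ ⟨u, hu, rfl, rfl⟩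
    obtain ⟨hsim, hswap⟩ := mem_sem_bisimBody.1 (hQ hu)
    refine ⟨⟨_, hswap, rfl, rfl⟩, Subsingleton.elim _ _, fun a p' hp' => ?_⟩
    obtain ⟨q', hq', hu'⟩ := hsim a p' hp'
    exact ⟨q', hq', _, hu', by simp, by simp⟩
  · rintro ⟨R, hR, hv⟩
    refine ⟨{u | R (u 0) (u 1)},
      fun u hu => mem_sem_bisimBody.2 ⟨fun a s hs => ?_, (hR _ _ hu).1⟩, hv⟩
    obtain ⟨t, ht, hst⟩ := (hR _ _ hu).2.2 a s hs
    exact ⟨t, ht, by simpa⟩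

lemma mem_sem_concat {Y Z : NT} {𝒱 : PVar2 NT → Set (Fin 3 → L.S)} {v : Fin 3 → L.S} :
    v ∈ sem L (.repl (fun z => if z = 2 then 0 else z)
        (diaStarZ (.and
          (.repl (fun z => if z = 1 then 2 else z) (.svar (.inl Y)))
          (.repl (fun z => if z = 0 then 2 else z) (.svar (.inl Z)))))) 𝒱 ↔
      ∃ s, L.Reachable (v 0) s ∧ ![v 0, s, s] ∈ 𝒱 (.inl Y) ∧ ![s, v 1, s] ∈ 𝒱 (.inl Z) := by
  simp only [sem, Set.mem_ofPred_eq]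
  rw [mem_sem_diaStarZ (fun Q => by simp [sem])]
  have hY : ∀ s, (fun z => update (fun z => v (if z = 2 then 0 else z)) 2 s
      (if z = 1 then 2 else z)) = ![v 0, s, s] := fun s => by funext z; fin_cases z <;> rfl
  have hZ : ∀ s, (fun z => update (fun z => v (if z = 2 then 0 else z)) 2 s
      (if z = 0 then 2 else z)) = ![s, v 1, s] := fun s => by funext z; fin_cases z <;> rfl
  simp only [sem, Set.mem_inter_iff, Set.mem_ofPred_eq, hY, hZ]
  rfl

lemma mem_cfgStep [DecidableEq Alph] {G : CNFGrammar NT Alph} {σ : NT → Set (Fin 3 → L.S)} {i : NT}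
    {v : Fin 3 → L.S} :
    v ∈ cfgStep G L σ i ↔
      (∃ a, (i, a) ∈ G.R1 ∧ ∃ s, L.Tr (v 0) a s ∧ L.Bisimilar s (v 1)) ∨
        ∃ Y Z, (i, Y, Z) ∈ G.R2 ∧
          ∃ s, L.Reachable (v 0) s ∧ ![v 0, s, s] ∈ σ Y ∧ ![s, v 1, s] ∈ σ Z := by
  unfold cfgStep cfgBody
  rw [sem_or, Set.mem_union, mem_sem_bigOr, mem_sem_bigOr]
  simp only [List.mem_map, Finset.mem_toList, Finset.mem_filter]
  refine or_congr ?_ ?_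
  · simp [sem, mem_sem_bisimF]
  · simp [mem_sem_concat]

lemma cfgLfp_eq_of_isLeast [DecidableEq Alph] {G : CNFGrammar NT Alph} {σ : NT → Set (Fin 3 → L.S)}
    (hσ : ∀ j, cfgStep G L σ j ⊆ σ j)
    (hleast : ∀ τ, (∀ j, cfgStep G L τ j ⊆ τ j) → ∀ j, σ j ⊆ τ j) :
    cfgLfp G L = σ := by
  funext i
  refine Set.Subset.antisymm (Set.sInter_subset_of_mem ⟨σ, hσ, rfl⟩) ?_
  rintro v hv _ ⟨τ, hτ, rfl⟩
  exact hleast τ hτ i hv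

end CFGFormulas

lemma List.append_prefix_iff {α : Type*} {u u' l : List α} :
    u ++ u' <+: l ↔ u <+: l ∧ u' <+: l.drop u.length := by
  constructor
  · rintro ⟨t, rfl⟩
    exact ⟨(List.prefix_append u u').trans (List.prefix_append _ t), by simp⟩
  · rintro ⟨hu, hu'⟩
    rw [List.prefix_append_drop hu]
    exact (List.prefix_append_right_inj u).2 hu'

section LinearLTS
variable {α : Type}

def Spans (w u : List α) (i j : ℕ) : Prop := u <+: w.drop i ∧ i + u.length = j

lemma spans_append_iff {w u u' : List α} {i k : ℕ} :
    Spans w (u ++ u') i k ↔ ∃ j, Spans w u i j ∧ Spans w u' j k := by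
  simp only [Spans, List.append_prefix_iff, List.drop_drop, List.length_append]
  constructor
  · rintro ⟨⟨hu, hu'⟩, rfl⟩
    exact ⟨_, ⟨hu, rfl⟩, hu', by omega⟩
  · rintro ⟨_, ⟨hu, rfl⟩, hu', rfl⟩
    exact ⟨⟨hu, hu'⟩, by omega⟩

lemma spans_singleton_iff {w : List α} {a : α} {i j : ℕ} :
    Spans w [a] i j ↔ w[i]? = some a ∧ i + 1 = j := by
  simp [Spans, List.singleton_prefix_iff_head?_eq_some]

lemma spans_zero_length_iff {w u : List α} : Spans w u 0 w.length ↔ u = w := by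
  refine ⟨fun ⟨hu, hlen⟩ => ?_, fun hu => ⟨by simp [hu], by simp [hu]⟩⟩
  exact (by simpa using hu : u <+: w).eq_of_length (by omega)

lemma linLTS_tr_iff {w : List α} {i j : Fin (w.length + 1)} {a : α} :
    (linLTS w).Tr i a j ↔ Spans w [a] i j := by
  rw [spans_singleton_iff]
  constructor
  · rintro ⟨hi, rfl, hj⟩
    exact ⟨List.getElem?_eq_getElem hi, hj.symm⟩
  · rintro ⟨ha, hj⟩
    obtain ⟨hi, rfl⟩ := List.getElem?_eq_some_iff.1 ha
    exact ⟨hi, rfl, hj.symm⟩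

lemma linLTS_reachable_iff {w : List α} {i j : Fin (w.length + 1)} :
    (linLTS w).Reachable i j ↔ i ≤ j := by
  constructor
  · intro h
    induction h with
    | refl => exact le_rfl
    | tail _ hstep ih =>
      obtain ⟨a, -, -, hsucc⟩ := hstep
      exact ih.trans (Fin.le_def.2 (by omega))
  · intro hij
    obtain ⟨k, hk⟩ := Nat.exists_eq_add_of_le (Fin.le_def.1 hij)
    induction k generalizing j with
    | zero => exact Fin.ext hk ▸ .refl
    | succ k ih =>
      have hlt : (i : ℕ) + k < w.length := by omega
      exact .tail (ih (j := ⟨i + k, by omega⟩) (Fin.le_def.2 (by simp)) rfl)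
        ⟨_, hlt, rfl, by simp [hk, Nat.add_assoc]⟩

lemma linLTS_not_rel_of_lt {w : List α} {R : Fin (w.length + 1) → Fin (w.length + 1) → Prop}
    (hR : (linLTS w).IsBisimulation R) {i j : Fin (w.length + 1)} (hlt : i < j) : ¬R i j := by
  intro hij
  have hi : (i : ℕ) < w.length := by omega
  obtain ⟨j', ⟨hj, -, hj'⟩, hR'⟩ := (hR i j hij).2.2 _ ⟨i + 1, by omega⟩ ⟨hi, rfl, rfl⟩
  exact linLTS_not_rel_of_lt hR (Fin.lt_def.2 (by simp; omega)) hR'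
termination_by w.length - j

lemma linLTS_bisimilar_iff {w : List α} {i j : Fin (w.length + 1)} :
    (linLTS w).Bisimilar i j ↔ i = j := by
  refine ⟨fun ⟨R, hR, hij⟩ => ?_, by rintro rfl; exact (linLTS w).bisimilar_refl i⟩
  rcases lt_trichotomy i j with h | h | h
  · exact absurd hij (linLTS_not_rel_of_lt hR h)
  · exact h
  · exact absurd (hR i j hij).1 (linLTS_not_rel_of_lt hR h)

end LinearLTS

section Parsing
variable {NT Alph : Type} {G : CNFGrammar NT Alph} {w : List Alph}

/-- The intended solution of the fixpoint system on `linLTS w`. -/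
def derivableSpans (G : CNFGrammar NT Alph) (w : List Alph) (j : NT) :
    Set (Fin 3 → (linLTS w).S) :=
  {v : Fin 3 → Fin (w.length + 1) | ∃ u, Derives G j u ∧ Spans w u (v 0) (v 1)}

lemma mem_derivableSpans_iff {j : NT} {v : Fin 3 → Fin (w.length + 1)} (h0 : v 0 = 0)
    (h1 : v 1 = Fin.last w.length) : v ∈ derivableSpans G w j ↔ Derives G j w := by
  have hspans : ∀ u, Spans w u (v 0) (v 1) ↔ u = w := fun u => by
    rw [h0, h1]
    exact spans_zero_length_iff
  exact ⟨fun ⟨u, hu, hsp⟩ => (hspans u).1 hsp ▸ hu, fun h => ⟨w, h, (hspans w).2 rfl⟩⟩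

variable [DecidableEq NT] [DecidableEq Alph] [Fintype Alph]

lemma cfgStep_derivableSpans_subset (j : NT) :
    cfgStep G (linLTS w) (derivableSpans G w) j ⊆ derivableSpans G w j := by
  intro v hv
  rcases mem_cfgStep.1 hv with
    ⟨a, ha, s, htr, hbisim⟩ | ⟨Y, Z, hr, s, -, ⟨u, hu, hsp⟩, ⟨u', hu', hsp'⟩⟩
  · obtain rfl := linLTS_bisimilar_iff.1 hbisim
    exact ⟨[a], .leaf ha, linLTS_tr_iff.1 htr⟩
  · exact ⟨u ++ u', .node hr hu hu', spans_append_iff.2 ⟨Fin.val s, hsp, hsp'⟩⟩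

lemma mem_of_derives {σ : NT → Set (Fin 3 → (linLTS w).S)}
    (hσ : ∀ j, cfgStep G (linLTS w) σ j ⊆ σ j) {j : NT} {u : List Alph} (h : Derives G j u)
    (v : Fin 3 → Fin (w.length + 1)) (hv : Spans w u (v 0) (v 1)) : v ∈ σ j := by
  induction h generalizing v with
  | leaf ha =>
    exact hσ _ (mem_cfgStep.2 (.inl ⟨_, ha, v 1, linLTS_tr_iff.2 hv, (linLTS w).bisimilar_refl _⟩))
  | node hr _ _ ih ih' =>
    obtain ⟨s, hs, hs'⟩ := spans_append_iff.1 hv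
    have hsw : s < w.length + 1 := by have := (v 1).isLt; have := hs'.2; omega
    refine hσ _ (mem_cfgStep.2 (.inr ⟨_, _, hr, ⟨s, hsw⟩, ?_, ih _ hs, ih' _ hs'⟩))
    exact linLTS_reachable_iff.2 (Fin.le_def.2 (by have := hs.2; simp; omega))

lemma cfgLfp_linLTS : cfgLfp G (linLTS w) = derivableSpans G w :=
  cfgLfp_eq_of_isLeast cfgStep_derivableSpans_subset
    fun _ hτ _ _ ⟨_, hu, hsp⟩ => mem_of_derives hτ hu _ hsp

end Parsing

/-- for a CNF grammar `G`, a word `w`, and a valuation `v` sending `x`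
to the initial and `y` to the final state of the linear LTS of `w`,
`L_w, v ⊨ φ_i` iff `w` is derivable in `G` from the nonterminal `X_i`. -/
theorem cfg_parsing {NT Alph : Type} [DecidableEq NT] [DecidableEq Alph] [Fintype Alph]
    (G : CNFGrammar NT Alph) (w : List Alph) (i : NT)
    (v : Fin 3 → (linLTS w).S) (hvx : v 0 = (linLTS w).s0)
    (hvy : v 1 = Fin.last w.length) :
    v ∈ cfgLfp G (linLTS w) i ↔ Derives G i w := by
  rw [cfgLfp_linLTS]
  exact mem_derivableSpans_iff hvx hvy
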